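/- arXiv:2509.02562 — 4 statements merged into one kernel-verified Lean document; each statement's English description precedes it below -/
import Mathlib

section
/- For every ε > 0 there exists N such that for all n ≥ N, the burning number satisfies b(T_n^d) ≥ (α_d − ε)·n^{d/(d+1)}, where α_d = ((d+1)!/2^d)^{1/(d+1)}. -/
open MeasureTheory ProbabilityTheory Filter

/-- The discrete torus graph on `(ℤ/nℤ)^d`. -/
def torusGraph (d n : ℕ) : SimpleGraph (Fin d → ZMod n) where
  Adj x y := x ≠ y ∧ ∃ i, (x i = y i + 1 ∨ y i = x i + 1) ∧ ∀ j, j ≠ i → x j = y j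
  symm := ⟨by
    rintro x y ⟨hne, i, hor, hj⟩
    exact ⟨hne.symm, i, hor.symm, fun j hji => (hj j hji).symm⟩⟩
  loopless := ⟨by rintro x ⟨hne, -⟩; exact hne rfl⟩

/-- Closed ball of radius `r` around `x` in the graph metric of the torus. -/
def torusBall (d n : ℕ) (x : Fin d → ZMod n) (r : ℕ) : Set (Fin d → ZMod n) :=
  {y | (torusGraph d n).dist x y ≤ r}

/-- `burnedSet d n x k = ⋃_{i=1}^k B̄(x_i, k−i)`, with the `0`-indexed convention
`x i = x_{i+1}`. -/
def burnedSet (d n : ℕ) (x : ℕ → (Fin d → ZMod n)) (k : ℕ) : Set (Fin d → ZMod n) :=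
  ⋃ i ∈ Finset.range k, torusBall d n (x i) (k - 1 - i)

/-- The burning number of the torus. -/
noncomputable def burningNumber (d n : ℕ) : ℕ :=
  sInf {k | 1 ≤ k ∧ ∃ x : ℕ → (Fin d → ZMod n), burnedSet d n x k = Set.univ}

/-- The first time at which the burning process covers the whole torus. -/
noncomputable def burnTime (d n : ℕ) (x : ℕ → (Fin d → ZMod n)) : ℕ :=
  sInf {k | burnedSet d n x k = Set.univ}

/-!
Read each coordinate of `y - x` through its representative of least absolute value: since a
torus edge changes one coordinate by `±1`, the graph distance dominates the resulting `ℓ¹`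
distance, so a ball of radius `r` injects into the `ℓ¹` ball of `ℤ^d`, which has at most
`2^d·C(r+d, d)` points (a sign pattern and, by stars and bars, `d` absolute values with a slack).
A burning sequence of length `k` covers all `n^d` vertices by balls of radii `0, …, k-1`, so by
the hockey-stick identity `n^d ≤ 2^d·C(k+d, d+1) ≤ 2^d·(k+d)^(d+1)/(d+1)!`, that is
`α_d·n^(d/(d+1)) ≤ k + d`; and `d` is eventually below `ε·n^(d/(d+1))`.
-/

theorem ZMod.natAbs_valMinAbs_le_natAbs {n : ℕ} [NeZero n] {a : ZMod n} {k : ℤ}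
    (h : (k : ZMod n) = a) : a.valMinAbs.natAbs ≤ k.natAbs :=
  ZMod.natAbs_min_of_le_div_two n _ _ (by rw [ZMod.coe_valMinAbs, h]) a.natAbs_valMinAbs_le

theorem finite_setOf_sum_natAbs_le (d r : ℕ) :
    {z : Fin d → ℤ | ∑ i, (z i).natAbs ≤ r}.Finite := by
  refine (Set.Finite.pi' fun _ => Set.finite_Icc (-(r : ℤ)) r).subset fun z hz i => ?_
  have : (z i).natAbs ≤ r :=
    (Finset.single_le_sum (fun j _ => Nat.zero_le _) (Finset.mem_univ i)).trans hz
  rw [Set.mem_Icc, ← abs_le, Int.abs_eq_natAbs]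
  exact_mod_cast this

/-- Stars and bars: a point of the `ℓ¹` ball is a sign pattern together with `d + 1`
natural numbers summing to `r`, the last one being the slack. -/
theorem ncard_setOf_sum_natAbs_le (d r : ℕ) :
    {z : Fin d → ℤ | ∑ i, (z i).natAbs ≤ r}.ncard ≤ 2 ^ d * (r + d).choose d := by
  classical
  let encode (z : Fin d → ℤ) : (Fin d → Bool) × (Fin (d + 1) →₀ ℕ) :=
    (fun i => decide (0 ≤ z i),
      Finsupp.equivFunOnFinite.symm (Fin.cons (r - ∑ i, (z i).natAbs) fun i => (z i).natAbs))
  let target := (Finset.univ : Finset (Fin d → Bool)) ×ˢ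
    (Finset.univ : Finset (Fin (d + 1))).finsuppAntidiag r
  calc _ ≤ (target : Set _).ncard := by
        refine Set.ncard_le_ncard_of_injOn (t := (target : Set _)) encode
          (fun z hz => ?_) (fun z _ z' _ h => ?_)
        · simp [target, encode, Fin.sum_cons, Nat.sub_add_cancel hz.out]
        · simp only [encode, Prod.mk.injEq, funext_iff, Finsupp.ext_iff,
            Finsupp.coe_equivFunOnFinite_symm] at h
          obtain ⟨hsign, habs⟩ := h
          funext i
          have habs_i := habs i.succ
          have hsign_i := hsign i
          simp only [Fin.cons_succ, decide_eq_decide] at habs_i hsign_i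
          omega
    _ = 2 ^ d * (r + d).choose d := by
        rw [Set.ncard_coe_finset, Finset.card_product, Finset.card_finsuppAntidiag_nat_eq_choose]
        simp only [Finset.card_univ, Fintype.card_pi, Fintype.card_bool, Finset.prod_const,
          Fintype.card_fin, add_right_comm d 1 r, Nat.add_sub_cancel]
        rw [add_comm d r, Nat.choose_symm_add]

section Torus

variable {d n : ℕ}

def torusNorm (v : Fin d → ZMod n) : ℕ :=
  ∑ i, (v i).valMinAbs.natAbs

theorem torusNorm_zero : torusNorm (0 : Fin d → ZMod n) = 0 := by
  simp [torusNorm]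

theorem torusNorm_add_le (v w : Fin d → ZMod n) :
    torusNorm (v + w) ≤ torusNorm v + torusNorm w := by
  simp only [torusNorm, ← Finset.sum_add_distrib]
  gcongr with i
  exact (ZMod.natAbs_valMinAbs_add_le _ _).trans (Int.natAbs_add_le _ _)

theorem torusNorm_sub_le_one_of_adj [NeZero n] {x y : Fin d → ZMod n}
    (h : (torusGraph d n).Adj x y) : torusNorm (y - x) ≤ 1 := by
  obtain ⟨-, i, hstep, hrest⟩ := h
  have hsingle : torusNorm (y - x) = (y i - x i).valMinAbs.natAbs :=
    Finset.sum_eq_single_of_mem i (Finset.mem_univ i) fun j _ hji => by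
      simp [hrest j hji]
  rw [hsingle]
  rcases hstep with hx | hy
  · simpa using ZMod.natAbs_valMinAbs_le_natAbs (a := y i - x i) (k := -1)
      (by push_cast; rw [hx]; ring)
  · simpa using ZMod.natAbs_valMinAbs_le_natAbs (a := y i - x i) (k := 1)
      (by push_cast; rw [hy]; ring)

theorem torusNorm_sub_le_length [NeZero n] {x y : Fin d → ZMod n}
    (w : (torusGraph d n).Walk x y) : torusNorm (y - x) ≤ w.length := by
  induction w with
  | nil => simp [torusNorm_zero]
  | @cons x u y hadj _ ih =>
    calc torusNorm (y - x) = torusNorm ((u - x) + (y - u)) := by rw [sub_add_sub_cancel']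
      _ ≤ 1 + _ := (torusNorm_add_le _ _).trans (add_le_add (torusNorm_sub_le_one_of_adj hadj) ih)
      _ = _ := by rw [SimpleGraph.Walk.length_cons, add_comm]

theorem torusGraph_reachable_add_single_one (x : Fin d → ZMod n) (i : Fin d) :
    (torusGraph d n).Reachable x (x + Pi.single i 1) := by
  by_cases h : x = x + Pi.single i 1
  · rw [← h]
  · exact SimpleGraph.Adj.reachable
      ⟨h, i, Or.inr (by simp), fun j hji => by simp [hji]⟩

theorem torusGraph_reachable_add_single [NeZero n] (x : Fin d → ZMod n) (i : Fin d)
    (a : ZMod n) : (torusGraph d n).Reachable x (x + Pi.single i a) := by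
  rw [← ZMod.natCast_zmod_val a]
  induction a.val with
  | zero => simp
  | succ m ih =>
    rw [Nat.cast_succ, Pi.single_add, ← add_assoc]
    exact ih.trans (torusGraph_reachable_add_single_one _ i)

theorem torusGraph_preconnected [NeZero n] : (torusGraph d n).Preconnected := by
  intro x y
  suffices h : ∀ v x, (torusGraph d n).Reachable x (x + v) by
    simpa using h (y - x) x
  intro v
  induction v using Pi.single_induction with
  | zero => simp
  | add v w hv hw => exact fun x => (hv x).trans (by simpa [add_assoc] using hw (x + v))
  | single i a => exact fun x => torusGraph_reachable_add_single x i a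

theorem torusNorm_sub_le_dist [NeZero n] (x y : Fin d → ZMod n) :
    torusNorm (y - x) ≤ (torusGraph d n).dist x y := by
  obtain ⟨w, hw⟩ := (torusGraph_preconnected x y).exists_walk_length_eq_dist
  exact hw ▸ torusNorm_sub_le_length w

theorem ncard_setOf_torusNorm_le (r : ℕ) :
    {v : Fin d → ZMod n | torusNorm v ≤ r}.ncard ≤ 2 ^ d * (r + d).choose d :=
  (Set.ncard_le_ncard_of_injOn (fun (v : Fin d → ZMod n) i => (v i).valMinAbs) (fun _ hv => hv)
    (fun _ _ _ _ h => funext fun i => ZMod.valMinAbs_inj.mp (congrFun h i))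
    (finite_setOf_sum_natAbs_le d r)).trans (ncard_setOf_sum_natAbs_le d r)

theorem ncard_torusBall_le [NeZero n] (x : Fin d → ZMod n) (r : ℕ) :
    (torusBall d n x r).ncard ≤ 2 ^ d * (r + d).choose d :=
  (Set.ncard_le_ncard_of_injOn (· - x) (fun y hy => (torusNorm_sub_le_dist x y).trans hy)
    (fun _ _ _ _ h => sub_left_inj.mp h)).trans (ncard_setOf_torusNorm_le r)

theorem pow_le_of_burnedSet_eq_univ {k : ℕ} [NeZero n] {x : ℕ → Fin d → ZMod n}
    (hx : burnedSet d n x k = Set.univ) : n ^ d ≤ 2 ^ d * (k + d).choose (d + 1) := by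
  calc n ^ d = (burnedSet d n x k).ncard := by
        rw [hx, Set.ncard_univ, Nat.card_eq_fintype_card, Fintype.card_pi, Finset.prod_const,
          ZMod.card, Finset.card_univ, Fintype.card_fin]
    _ ≤ ∑ i ∈ Finset.range k, (torusBall d n (x i) (k - 1 - i)).ncard :=
        Finset.set_ncard_biUnion_le _ _
    _ ≤ ∑ i ∈ Finset.range k, 2 ^ d * (k - 1 - i + d).choose d := by
        gcongr with i; exact ncard_torusBall_le _ _
    _ = 2 ^ d * ∑ i ∈ Finset.range k, (i + d).choose d := by
        rw [← Finset.mul_sum, ← Finset.sum_range_reflect (fun i => (i + d).choose d)]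
    _ = 2 ^ d * (k + d).choose (d + 1) := by
        cases k with
        | zero => simp
        | succ k => rw [Nat.sum_range_add_choose, add_right_comm]

end Torus

theorem exists_burnedSet_eq_univ (d n : ℕ) [NeZero n] :
    ∃ x : ℕ → Fin d → ZMod n,
      burnedSet d n x (Fintype.card (Fin d → ZMod n)) = Set.univ := by
  let e := Fintype.equivFin (Fin d → ZMod n)
  refine ⟨fun i => if h : i < Fintype.card _ then e.symm ⟨i, h⟩ else 0,
    Set.eq_univ_of_forall fun y => ?_⟩
  simp only [burnedSet, Set.mem_iUnion]
  have hy := (e y).isLt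
  refine ⟨e y, Finset.mem_range.mpr hy, ?_⟩
  simp only [torusBall, dif_pos hy, Fin.eta, Equiv.symm_apply_apply, SimpleGraph.dist_self,
    Set.mem_ofPred_eq, zero_le]

theorem exists_burnedSet_burningNumber_eq_univ (d n : ℕ) [NeZero n] :
    ∃ x : ℕ → Fin d → ZMod n, burnedSet d n x (burningNumber d n) = Set.univ := by
  obtain ⟨x, hx⟩ := exists_burnedSet_eq_univ d n
  exact (Nat.sInf_mem (s := {k | 1 ≤ k ∧ ∃ x, burnedSet d n x k = Set.univ})
    ⟨_, Fintype.card_pos, x, hx⟩).2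

/-- The constant `α_d` of the lower bound. -/
noncomputable def burningConstant (d : ℕ) : ℝ :=
  (((d + 1).factorial : ℝ) / 2 ^ d) ^ ((1 : ℝ) / (d + 1))

theorem burningConstant_mul_rpow_le {d n k : ℕ} (h : n ^ d ≤ 2 ^ d * (k + d).choose (d + 1)) :
    burningConstant d * (n : ℝ) ^ ((d : ℝ) / (d + 1)) ≤ k + d := by
  have hd : (d : ℝ) + 1 ≠ 0 := by positivity
  have hpow : (burningConstant d * (n : ℝ) ^ ((d : ℝ) / (d + 1))) ^ (d + 1)
      = (d + 1).factorial / 2 ^ d * (n : ℝ) ^ d := by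
    rw [mul_pow, burningConstant, one_div, ← Real.rpow_mul_natCast (by positivity),
      ← Real.rpow_mul_natCast (by positivity)]
    push_cast
    rw [inv_mul_cancel₀ hd, div_mul_cancel₀ _ hd, Real.rpow_one, Real.rpow_natCast]
  have hchoose : ((k + d).choose (d + 1) : ℝ) ≤ ((k : ℝ) + d) ^ (d + 1) / (d + 1).factorial :=
    mod_cast Nat.choose_le_pow_div (d + 1) (k + d)
  have hcast : (n : ℝ) ^ d ≤ 2 ^ d * ((k + d).choose (d + 1) : ℝ) := by exact_mod_cast h
  refine (pow_le_pow_iff_left₀ (by unfold burningConstant; positivity) (by positivity)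
    d.succ_ne_zero).mp ?_
  rw [hpow, div_mul_eq_mul_div, div_le_iff₀ (by positivity)]
  calc ((d + 1).factorial : ℝ) * n ^ d
      ≤ (d + 1).factorial * (2 ^ d * (((k : ℝ) + d) ^ (d + 1) / (d + 1).factorial)) := by
        gcongr
        exact hcast.trans (by gcongr)
    _ = ((k : ℝ) + d) ^ (d + 1) * 2 ^ d := by field_simp

/-- For every `ε > 0` there exists `N` such that for all `n ≥ N`,
`b(T_n^d) ≥ (α_d − ε)·n^{d/(d+1)}`, where `α_d = ((d+1)!/2^d)^{1/(d+1)}`. -/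
theorem burningNumber_lower_bound (d : ℕ) (hd : 1 ≤ d) :
    ∀ ε > (0 : ℝ), ∃ N : ℕ, ∀ n ≥ N,
      (((((d+1).factorial : ℝ) / 2 ^ d) ^ ((1 : ℝ) / (d+1)) - ε) * (n : ℝ) ^ ((d : ℝ) / (d+1)))
        ≤ (burningNumber d n : ℝ) := by
  intro ε hε
  have hθ : 0 < (d : ℝ) / (d + 1) := div_pos (Nat.cast_pos.mpr hd) (by positivity)
  obtain ⟨N, hN⟩ : ∃ N : ℕ, ∀ n ≥ N,
      (d : ℝ) ≤ ε * (n : ℝ) ^ ((d : ℝ) / (d + 1)) :=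
    eventually_atTop.mp <| (((tendsto_rpow_atTop hθ).comp tendsto_natCast_atTop_atTop)
      |>.const_mul_atTop hε).eventually_ge_atTop _
  refine ⟨max N 1, fun n hn => ?_⟩
  have : NeZero n := ⟨by omega⟩
  obtain ⟨x, hx⟩ := exists_burnedSet_burningNumber_eq_univ d n
  have hbound := burningConstant_mul_rpow_le (pow_le_of_burnedSet_eq_univ hx)
  have hsmall := hN n (le_of_max_le_left hn)
  rw [burningConstant] at hbound
  rw [sub_mul]
  linarith
end

section
/- Let y : [0,T) → ℝ be the maximal solution of y^{(d+1)} = 2^d·y·y^{(d)} with y(0) = ⋯ = y^{(d−1)}(0) = 0 and y^{(d)}(0) = 1. Then for all t ∈ [0,T), y^{(d)}(t) = exp((2^d/d!)·∫_0^t (t−s)^d·y^{(d)}(s) ds). -/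
open MeasureTheory ProbabilityTheory Filter

/-- `y` is a solution on `[0,T)` of the generalised Blasius-type Cauchy problem
`y^{(d+1)} = c·y·y^{(d)}`, `y(0) = ⋯ = y^{(d−1)}(0) = 0`, `y^{(d)}(0) = 1`. -/
def IsBlasiusSolOn (d : ℕ) (c T : ℝ) (y : ℝ → ℝ) : Prop :=
  ContDiffOn ℝ (d + 1) y (Set.Ico 0 T) ∧
  (∀ k < d, iteratedDerivWithin k y (Set.Ico 0 T) 0 = 0) ∧
  iteratedDerivWithin d y (Set.Ico 0 T) 0 = 1 ∧
  ∀ t ∈ Set.Ico (0 : ℝ) T,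
    iteratedDerivWithin (d + 1) y (Set.Ico 0 T) t
      = c * y t * iteratedDerivWithin d y (Set.Ico 0 T) t

/-- `y : [0,T)` is *the maximal solution* of the Cauchy problem
`y^{(d+1)} = c·y·y^{(d)}` with the Blasius initial conditions: it is a solution and
no solution exists on a longer interval, so `T` is the explosion time. -/
def IsMaxBlasiusSol (d : ℕ) (c T : ℝ) (y : ℝ → ℝ) : Prop :=
  0 < T ∧ IsBlasiusSolOn d c T y ∧
    ∀ (T' : ℝ) (z : ℝ → ℝ), IsBlasiusSolOn d c T' z → T' ≤ T

/-
Write `g = y⁽ᵈ⁾` and `Y t = ∫₀ᵗ y`. The equation says `g' = 2ᵈ Y' g` with `g 0 = 1`, so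
`g = exp (2ᵈ Y)`. The antiderivative `Y` vanishes at `0` together with its first `d` derivatives
(`Y⁽ᵏ⁺¹⁾ = y⁽ᵏ⁾`), so Taylor's formula with integral remainder, applied to `Y` at order `d`, gives
`Y t = (1 / d!) ∫₀ᵗ (t - s)ᵈ g s ds`.
-/

open Set
open scoped Nat

section

variable {E : Type*} [NormedAddCommGroup E] [NormedSpace ℝ E]

theorem iteratedDerivWithin_subset {n : ℕ} {f : ℝ → E} {s t : Set ℝ} {x : ℝ} (st : s ⊆ t)
    (hs : UniqueDiffOn ℝ s) (ht : UniqueDiffOn ℝ t) (hf : ContDiffOn ℝ n f t) (hx : x ∈ s) :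
    iteratedDerivWithin n f s x = iteratedDerivWithin n f t x :=
  congrArg (· fun _ => 1) (iteratedFDerivWithin_subset st hs ht hf hx)

variable [CompleteSpace E] {f : ℝ → E} {a b c : ℝ}

theorem ContinuousOn.hasDerivWithinAt_integral_Icc (hf : ContinuousOn f (Icc a b))
    (hc : c ∈ Icc a b) {x : ℝ} (hx : x ∈ Icc a b) :
    HasDerivWithinAt (fun u => ∫ t in c..u, f t) (f x) (Icc a b) x := by
  have : Fact (x ∈ Icc a b) := ⟨hx⟩
  exact intervalIntegral.integral_hasDerivWithinAt_right
    ((hf.mono (uIcc_subset_Icc hc hx)).intervalIntegrable)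
    (hf.stronglyMeasurableAtFilter_nhdsWithin measurableSet_Icc x) (hf x hx)

theorem ContinuousOn.derivWithin_integral_Icc (hab : a < b) (hf : ContinuousOn f (Icc a b))
    (hc : c ∈ Icc a b) :
    EqOn (derivWithin (fun u => ∫ t in c..u, f t) (Icc a b)) f (Icc a b) := fun x hx =>
  (hf.hasDerivWithinAt_integral_Icc hc hx).derivWithin (uniqueDiffOn_Icc hab x hx)

theorem ContinuousOn.iteratedDerivWithin_succ_integral_Icc (hab : a < b)
    (hf : ContinuousOn f (Icc a b)) (hc : c ∈ Icc a b) (k : ℕ) :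
    EqOn (iteratedDerivWithin (k + 1) (fun u => ∫ t in c..u, f t) (Icc a b))
      (iteratedDerivWithin k f (Icc a b)) (Icc a b) := by
  rw [iteratedDerivWithin_succ']
  exact iteratedDerivWithin_congr (hf.derivWithin_integral_Icc hab hc)

theorem ContDiffOn.integral_Icc {n : ℕ} (hab : a < b) (hf : ContDiffOn ℝ n f (Icc a b))
    (hc : c ∈ Icc a b) :
    ContDiffOn ℝ (n + 1) (fun u => ∫ t in c..u, f t) (Icc a b) := by
  rw [contDiffOn_succ_iff_derivWithin (uniqueDiffOn_Icc hab)]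
  refine ⟨fun x hx => (hf.continuousOn.hasDerivWithinAt_integral_Icc hc hx).differentiableWithinAt,
    by simp, hf.congr (hf.continuousOn.derivWithin_integral_Icc hab hc)⟩

theorem integral_eq_integral_pow_smul_iteratedDerivWithin {n : ℕ} {s : Set ℝ}
    (hs : UniqueDiffOn ℝ s) (hs' : s.OrdConnected) (hf : ContDiffOn ℝ n f s) {x : ℝ}
    (ha : a ∈ s) (hx : x ∈ s) (h₀ : ∀ k < n, iteratedDerivWithin k f s a = 0) :
    ∫ t in a..x, f t = ∫ t in a..x, ((x - t) ^ n / n !) • iteratedDerivWithin n f s t := by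
  rcases eq_or_ne a x with rfl | hax
  · simp
  have hIs : uIcc a x ⊆ s := hs'.uIcc_subset ha hx
  have hfI : ∀ k ≤ n, EqOn (iteratedDerivWithin k f (uIcc a x)) (iteratedDerivWithin k f s)
      (uIcc a x) := fun k hk t ht =>
    iteratedDerivWithin_subset hIs (uniqueDiffOn_uIcc hax) hs (hf.of_le (by exact_mod_cast hk)) ht
  have hF : ∀ k, EqOn (iteratedDerivWithin (k + 1) (fun u => ∫ t in a..u, f t) (uIcc a x))
      (iteratedDerivWithin k f (uIcc a x)) (uIcc a x) :=
    (hf.mono hIs).continuousOn.iteratedDerivWithin_succ_integral_Icc (inf_lt_sup.2 hax)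
      left_mem_uIcc
  have htaylor := taylor_integral_remainder (x₀ := a) (x := x)
    (by exact_mod_cast (hf.mono hIs).integral_Icc (inf_lt_sup.2 hax) left_mem_uIcc)
  have hpoly : taylorWithinEval (fun u => ∫ t in a..u, f t) n (uIcc a x) a x = 0 := by
    rw [taylor_within_apply]
    refine Finset.sum_eq_zero fun k hk => ?_
    rcases k with _ | k
    · simp
    · rw [hF k left_mem_uIcc, hfI k (by grind) left_mem_uIcc, h₀ k (by grind), smul_zero]
  rw [hpoly, sub_zero] at htaylor
  rw [htaylor]
  refine intervalIntegral.integral_congr fun t ht => ?_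
  rw [hF n ht, hfI n le_rfl ht]

end

theorem Convex.eqOn_exp_of_hasDerivWithinAt {s : Set ℝ} (hs : Convex ℝ s) {g A a : ℝ → ℝ}
    {x₀ : ℝ} (hx₀ : x₀ ∈ s) (hg : ∀ x ∈ s, HasDerivWithinAt g (a x * g x) s x)
    (hA : ∀ x ∈ s, HasDerivWithinAt A (a x) s x) (h₀ : g x₀ = Real.exp (A x₀)) :
    EqOn g (fun x => Real.exp (A x)) s := by
  have hderiv : ∀ x ∈ s, HasDerivWithinAt (fun x => g x * Real.exp (-A x)) 0 s x := fun x hx =>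
    ((hg x hx).fun_mul (hA x hx).fun_neg.exp).congr_deriv (by ring)
  intro x hx
  have hconst := hs.norm_image_sub_le_of_norm_hasDerivWithin_le hderiv
    (fun _ _ => norm_zero.le) hx₀ hx
  rw [zero_mul, norm_le_zero_iff, sub_eq_zero, h₀, Real.exp_neg, Real.exp_neg,
    mul_inv_cancel₀ (Real.exp_ne_zero _), mul_inv_eq_one₀ (Real.exp_ne_zero _)] at hconst
  exact hconst

theorem blasius_integral_equation_general (d : ℕ)
    (T : ℝ) (y : ℝ → ℝ) (hy : IsMaxBlasiusSol d (2 ^ d) T y) :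
    ∀ t ∈ Set.Ico (0 : ℝ) T,
      iteratedDerivWithin d y (Set.Ico 0 T) t
        = Real.exp ((2 ^ d / (d.factorial : ℝ)) *
            ∫ s in (0 : ℝ)..t, (t - s) ^ d * iteratedDerivWithin d y (Set.Ico 0 T) s) := by
  obtain ⟨-, ⟨hy_smooth, hy_init, hy_initd, hy_ode⟩, -⟩ := hy
  intro t ht
  set g := iteratedDerivWithin d y (Ico 0 T)
  have hsub : Icc 0 t ⊆ Ico 0 T := Icc_subset_Ico_right ht.2
  have hg : ∀ u ∈ Icc 0 t, HasDerivWithinAt g (2 ^ d * y u * g u) (Icc 0 t) u := by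
    intro u hu
    rw [← hy_ode u (hsub hu), iteratedDerivWithin_succ]
    exact ((hy_smooth.differentiableOn_iteratedDerivWithin (by exact_mod_cast lt_add_one d)
      (uniqueDiffOn_Ico 0 T)) u (hsub hu)).hasDerivWithinAt.mono hsub
  have hY : ∀ u ∈ Icc 0 t, HasDerivWithinAt (fun v => 2 ^ d * ∫ s in 0..v, y s) (2 ^ d * y u)
      (Icc 0 t) u := fun u hu =>
    ((hy_smooth.continuousOn.mono hsub).hasDerivWithinAt_integral_Icc (left_mem_Icc.2 ht.1)
      hu).const_mul _
  have hexp := (convex_Icc 0 t).eqOn_exp_of_hasDerivWithinAt (left_mem_Icc.2 ht.1) hg hY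
    (by simp [g, hy_initd])
  have htaylor := integral_eq_integral_pow_smul_iteratedDerivWithin (uniqueDiffOn_Ico 0 T)
    ordConnected_Ico (hy_smooth.of_le (by simp)) (left_mem_Ico.2 (ht.1.trans_lt ht.2)) ht hy_init
  refine (hexp (right_mem_Icc.2 ht.1)).trans (congrArg Real.exp ?_)
  rw [htaylor, ← intervalIntegral.integral_const_mul, ← intervalIntegral.integral_const_mul]
  congr 2 with s
  simp only [smul_eq_mul]
  ring

/-- If `y : [0,T)` is the maximal solution of `y^{(d+1)} = 2^d·y·y^{(d)}`
with the Blasius initial conditions, then for all `t ∈ [0,T)`,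
`y^{(d)}(t) = exp((2^d/d!)·∫_0^t (t−s)^d·y^{(d)}(s) ds)`. -/
theorem blasius_integral_equation (d : ℕ) (hd : 1 ≤ d)
    (T : ℝ) (y : ℝ → ℝ) (hy : IsMaxBlasiusSol d (2 ^ d) T y) :
    ∀ t ∈ Set.Ico (0 : ℝ) T,
      iteratedDerivWithin d y (Set.Ico 0 T) t
        = Real.exp ((2 ^ d / (d.factorial : ℝ)) *
            ∫ s in (0 : ℝ)..t, (t - s) ^ d * iteratedDerivWithin d y (Set.Ico 0 T) s) :=
  blasius_integral_equation_general d T y hy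
end

section
/- Let y : [0,T) → ℝ be the maximal solution of y^{(d+1)} = 2^d·y·y^{(d)} with y(0) = ⋯ = y^{(d−1)}(0) = 0 and y^{(d)}(0) = 1. Then for every p ∈ ℕ: f_p(t) ≤ f_{p+1}(t) for all t ∈ [0,∞), and f_p(t) ≤ y^{(d)}(t) for all t ∈ [0,T). -/
/-!
Since `y^{(k)}(0) = 0` for `k < d`, Cauchy's formula for repeated integration gives
`∫₀ᵗ y = (1/d!) ∫₀ᵗ (t - s)^d y^{(d)}(s) ds`, and solving the linear equation
`(y^{(d)})' = (2^d y) y^{(d)}` gives `y^{(d)}(t) = exp (2^d ∫₀ᵗ y)`. Hence `y^{(d)}` is a fixed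
point of the monotone map `Φ h t = exp ((2^d/d!) ∫₀ᵗ (t - s)^d h(s) ds)`, whose iterates from
`f₀ = 1` are the `f_p`. As `Φ h ≥ 1 = f₀` for every `h ≥ 0`, induction on `p` gives both
`f_p ≤ f_{p+1}` and `f_p ≤ y^{(d)}`.
-/

open MeasureTheory ProbabilityTheory Filter

/-- The Picard-type iterates `f_0 = 1`,
`f_{p+1}(t) = exp((2^d/d!)·∫_0^t (t−s)^d·f_p(s) ds)`. -/
noncomputable def blasiusIter (d : ℕ) : ℕ → ℝ → ℝ
  | 0 => fun _ => 1
  | (p + 1) => fun t =>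
      Real.exp ((2 ^ d / (d.factorial : ℝ)) *
        ∫ s in (0 : ℝ)..t, (t - s) ^ d * blasiusIter d p s)

open Set intervalIntegral Topology
open scoped Nat Interval ContDiff

theorem ContDiffOn.hasDerivWithinAt_iteratedDerivWithin {f : ℝ → ℝ} {s : Set ℝ} {n : ℕ∞ω}
    {m : ℕ} {x : ℝ} (hf : ContDiffOn ℝ n f s) (hmn : m < n) (hs : UniqueDiffOn ℝ s)
    (hx : x ∈ s) :
    HasDerivWithinAt (iteratedDerivWithin m f s) (iteratedDerivWithin (m + 1) f s x) s x := by
  rw [iteratedDerivWithin_succ]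
  exact (hf.differentiableOn_iteratedDerivWithin hmn hs x hx).hasDerivWithinAt

theorem integral_pow_succ_mul_deriv {g g' : ℝ → ℝ} {a t : ℝ} (n : ℕ)
    (hg : ∀ x ∈ [[a, t]], HasDerivWithinAt g (g' x) [[a, t]] x)
    (hg' : IntervalIntegrable g' volume a t) (hga : g a = 0) :
    ∫ s in a..t, (t - s) ^ (n + 1) * g' s = (n + 1) * ∫ s in a..t, (t - s) ^ n * g s := by
  have hu : ∀ x ∈ [[a, t]], HasDerivWithinAt (fun s => (t - s) ^ (n + 1))
      (-((n + 1) * (t - x) ^ n)) [[a, t]] x := fun x _ => by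
    simpa using ((hasDerivAt_id x).const_sub t).fun_pow (n + 1) |>.hasDerivWithinAt
  rw [integral_mul_deriv_eq_deriv_mul_of_hasDerivWithinAt hu hg
    (Continuous.intervalIntegrable (by fun_prop) _ _) hg', hga,
    ← intervalIntegral.integral_const_mul]
  simp only [sub_self, zero_pow n.succ_ne_zero, zero_mul, mul_zero, zero_sub, neg_mul,
    intervalIntegral.integral_neg, neg_neg]
  exact integral_congr fun s _ => by ring

/-- Cauchy's formula for repeated integration. -/
theorem integral_eq_integral_pow_mul_iteratedDerivWithin {y : ℝ → ℝ} {a b t : ℝ} {n : ℕ}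
    (hy : ContDiffOn ℝ n y (Ico a b)) (h0 : ∀ k < n, iteratedDerivWithin k y (Ico a b) a = 0)
    (ht : t ∈ Ico a b) :
    ∫ s in a..t, y s =
      (n ! : ℝ)⁻¹ * ∫ s in a..t, (t - s) ^ n * iteratedDerivWithin n y (Ico a b) s := by
  induction n with
  | zero => simp
  | succ n ih =>
    have hsub : [[a, t]] ⊆ Ico a b := by
      rw [uIcc_of_le ht.1]; exact Icc_subset_Ico_right ht.2
    have hderiv : ∀ x ∈ [[a, t]], HasDerivWithinAt (iteratedDerivWithin n y (Ico a b))
        (iteratedDerivWithin (n + 1) y (Ico a b) x) [[a, t]] x := fun x hx =>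
      (hy.hasDerivWithinAt_iteratedDerivWithin (by norm_cast; omega) (uniqueDiffOn_Ico a b)
        (hsub hx)).mono hsub
    have hint : IntervalIntegrable (iteratedDerivWithin (n + 1) y (Ico a b)) volume a t :=
      ((hy.continuousOn_iteratedDerivWithin le_rfl (uniqueDiffOn_Ico a b)).mono
        hsub).intervalIntegrable
    rw [ih (hy.of_le (by norm_cast; omega)) fun k hk => h0 k (by omega),
      integral_pow_succ_mul_deriv n hderiv hint (h0 n n.lt_succ_self), Nat.factorial_succ]
    push_cast
    field_simp

theorem eq_mul_exp_integral_of_hasDerivWithinAt {g r : ℝ → ℝ} {a b t : ℝ}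
    (hr : ContinuousOn r (Ico a b))
    (hg : ∀ x ∈ Ico a b, HasDerivWithinAt g (r x * g x) (Ico a b) x) (ht : t ∈ Ico a b) :
    g t = g a * Real.exp (∫ s in a..t, r s) := by
  set F := fun u => g u * Real.exp (-∫ s in a..u, r s)
  have hsub : Icc a t ⊆ Ico a b := Icc_subset_Ico_right ht.2
  have hprim : ∀ x ∈ Ico a b, HasDerivWithinAt (fun u => ∫ s in a..u, r s) (r x) (Ici x) x := by
    intro x hx
    have hmem : Ico a b ∈ 𝓝[>] x := mem_of_superset (Ioo_mem_nhdsGT hx.2)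
      fun u hu => ⟨hx.1.trans hu.1.le, hu.2⟩
    refine integral_hasDerivWithinAt_right ?_ ⟨_, hmem, hr.aestronglyMeasurable measurableSet_Ico⟩
      ((hr x hx).mono_of_mem_nhdsWithin hmem)
    exact ((hr.mono (Icc_subset_Ico_right hx.2)).intervalIntegrable_of_Icc hx.1)
  have hcont : ContinuousOn F (Icc a t) := by
    refine ContinuousOn.mul (fun x hx => (hg x (hsub hx)).continuousWithinAt.mono hsub) ?_
    refine Real.continuous_exp.comp_continuousOn (ContinuousOn.neg ?_)
    have := continuousOn_primitive_interval (μ := volume) (a := a) (b := t) (f := r)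
      (by rw [uIcc_of_le ht.1]; exact (hr.mono hsub).integrableOn_Icc)
    rwa [uIcc_of_le ht.1] at this
  have hF : ∀ x ∈ Ico a t, HasDerivWithinAt F 0 (Ici x) x := by
    intro x hx
    have hx' : x ∈ Ico a b := ⟨hx.1, hx.2.trans ht.2⟩
    have hmem : Ico a b ∈ 𝓝[≥] x := mem_of_superset (Ico_mem_nhdsGE hx'.2)
      (Ico_subset_Ico_left hx'.1)
    have hexp : HasDerivWithinAt (fun u => Real.exp (-∫ s in a..u, r s))
        (Real.exp (-∫ s in a..x, r s) * -r x) (Ici x) x := (hprim x hx').fun_neg.exp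
    exact (((hg x hx').mono_of_mem_nhdsWithin hmem).fun_mul hexp).congr_deriv (by ring)
  have := constant_of_has_deriv_right_zero hcont hF t (right_mem_Icc.2 ht.1)
  simp only [F, integral_same, Real.exp_zero, Real.exp_neg, inv_one, mul_one] at this
  rw [← this, inv_mul_cancel_right₀ (Real.exp_pos _).ne']

noncomputable def blasiusPicard (d : ℕ) (h : ℝ → ℝ) (t : ℝ) : ℝ :=
  Real.exp ((2 ^ d / (d ! : ℝ)) * ∫ s in (0 : ℝ)..t, (t - s) ^ d * h s)

theorem blasiusIter_succ (d p : ℕ) : blasiusIter d (p + 1) = blasiusPicard d (blasiusIter d p) :=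
  rfl

theorem continuous_blasiusPicard (d : ℕ) {h : ℝ → ℝ} (hh : Continuous h) :
    Continuous (blasiusPicard d h) := by
  unfold blasiusPicard
  fun_prop

theorem one_le_blasiusPicard (d : ℕ) {h : ℝ → ℝ} {t : ℝ} (ht : 0 ≤ t)
    (hh : ∀ s ∈ Icc 0 t, 0 ≤ h s) : 1 ≤ blasiusPicard d h t := by
  refine Real.one_le_exp (mul_nonneg (by positivity) (integral_nonneg ht fun s hs => ?_))
  exact mul_nonneg (pow_nonneg (sub_nonneg.2 hs.2) d) (hh s hs)

theorem blasiusPicard_le_blasiusPicard (d : ℕ) {h₁ h₂ : ℝ → ℝ} {t : ℝ} (ht : 0 ≤ t)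
    (hh₁ : IntervalIntegrable h₁ volume 0 t) (hh₂ : IntervalIntegrable h₂ volume 0 t)
    (hle : ∀ s ∈ Icc 0 t, h₁ s ≤ h₂ s) : blasiusPicard d h₁ t ≤ blasiusPicard d h₂ t := by
  refine Real.exp_le_exp.2 (mul_le_mul_of_nonneg_left (integral_mono_on ht ?_ ?_ fun s hs => ?_)
    (by positivity))
  · exact hh₁.continuousOn_mul (by fun_prop)
  · exact hh₂.continuousOn_mul (by fun_prop)
  · exact mul_le_mul_of_nonneg_left (hle s hs) (pow_nonneg (sub_nonneg.2 hs.2) d)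

theorem continuous_blasiusIter (d p : ℕ) : Continuous (blasiusIter d p) := by
  induction p with
  | zero => exact continuous_const
  | succ p ih => rw [blasiusIter_succ]; exact continuous_blasiusPicard d ih

theorem blasiusIter_le_succ (d p : ℕ) {t : ℝ} (ht : 0 ≤ t) :
    blasiusIter d p t ≤ blasiusIter d (p + 1) t := by
  induction p generalizing t with
  | zero => exact one_le_blasiusPicard d ht fun _ _ => zero_le_one
  | succ p ih =>
    rw [blasiusIter_succ, blasiusIter_succ]
    exact blasiusPicard_le_blasiusPicard d ht
      ((continuous_blasiusIter d p).intervalIntegrable _ _)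
      ((continuous_blasiusIter d (p + 1)).intervalIntegrable _ _) fun s hs => ih hs.1

theorem blasiusIter_le_of_blasiusPicard_eq {g : ℝ → ℝ} {T : ℝ} (d p : ℕ)
    (hg : ContinuousOn g (Ico 0 T)) (hfix : ∀ t ∈ Ico 0 T, blasiusPicard d g t = g t)
    {t : ℝ} (ht : t ∈ Ico 0 T) : blasiusIter d p t ≤ g t := by
  induction p generalizing t with
  | zero =>
    rw [← hfix t ht]
    exact one_le_blasiusPicard d ht.1 fun s hs => by
      rw [← hfix s (Icc_subset_Ico_right ht.2 hs)]; exact (Real.exp_pos _).le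
  | succ p ih =>
    rw [blasiusIter_succ, ← hfix t ht]
    exact blasiusPicard_le_blasiusPicard d ht.1
      ((continuous_blasiusIter d p).intervalIntegrable _ _)
      ((hg.mono (Icc_subset_Ico_right ht.2)).intervalIntegrable_of_Icc ht.1)
      fun s hs => ih (Icc_subset_Ico_right ht.2 hs)

theorem IsBlasiusSolOn.blasiusPicard_iteratedDerivWithin_eq {d : ℕ} {T : ℝ} {y : ℝ → ℝ}
    (hy : IsBlasiusSolOn d (2 ^ d) T y) {t : ℝ} (ht : t ∈ Ico 0 T) :
    blasiusPicard d (iteratedDerivWithin d y (Ico 0 T)) t =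
      iteratedDerivWithin d y (Ico 0 T) t := by
  obtain ⟨hreg, hinit, hinitd, hode⟩ := hy
  have hrate : ContinuousOn (fun x => 2 ^ d * y x) (Ico 0 T) :=
    continuousOn_const.mul hreg.continuousOn
  have hderiv : ∀ x ∈ Ico (0 : ℝ) T, HasDerivWithinAt (iteratedDerivWithin d y (Ico 0 T))
      ((2 ^ d * y x) * iteratedDerivWithin d y (Ico 0 T) x) (Ico 0 T) x := fun x hx => by
    rw [← hode x hx]
    exact hreg.hasDerivWithinAt_iteratedDerivWithin (by norm_cast; omega)
      (uniqueDiffOn_Ico 0 T) hx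
  rw [eq_mul_exp_integral_of_hasDerivWithinAt hrate hderiv ht, hinitd, one_mul,
    intervalIntegral.integral_const_mul,
    integral_eq_integral_pow_mul_iteratedDerivWithin (hreg.of_le (by norm_cast; omega)) hinit ht,
    blasiusPicard, ← mul_assoc, div_eq_mul_inv]

theorem blasiusIter_monotone_le_general (d : ℕ)
    (T : ℝ) (y : ℝ → ℝ) (hy : IsMaxBlasiusSol d (2 ^ d) T y) :
    ∀ p : ℕ,
      (∀ t : ℝ, 0 ≤ t → blasiusIter d p t ≤ blasiusIter d (p + 1) t) ∧
      (∀ t ∈ Set.Ico (0 : ℝ) T,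
        blasiusIter d p t ≤ iteratedDerivWithin d y (Set.Ico 0 T) t) := by
  obtain ⟨-, hsol, -⟩ := hy
  have hcont : ContinuousOn (iteratedDerivWithin d y (Ico 0 T)) (Ico 0 T) :=
    hsol.1.continuousOn_iteratedDerivWithin (by norm_cast; omega) (uniqueDiffOn_Ico 0 T)
  exact fun p => ⟨fun t ht => blasiusIter_le_succ d p ht, fun t ht =>
    blasiusIter_le_of_blasiusPicard_eq d p hcont
      (fun _ => hsol.blasiusPicard_iteratedDerivWithin_eq) ht⟩

/-- If `y : [0,T)` is the maximal solution of `y^{(d+1)} = 2^d·y·y^{(d)}`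
with the Blasius initial conditions, then for every `p`: `f_p ≤ f_{p+1}` on `[0,∞)`, and
`f_p ≤ y^{(d)}` on `[0,T)`. -/
theorem blasiusIter_monotone_le (d : ℕ) (hd : 1 ≤ d)
    (T : ℝ) (y : ℝ → ℝ) (hy : IsMaxBlasiusSol d (2 ^ d) T y) :
    ∀ p : ℕ,
      (∀ t : ℝ, 0 ≤ t → blasiusIter d p t ≤ blasiusIter d (p + 1) t) ∧
      (∀ t ∈ Set.Ico (0 : ℝ) T,
        blasiusIter d p t ≤ iteratedDerivWithin d y (Set.Ico 0 T) t) :=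
  blasiusIter_monotone_le_general d T y hy
end

section
/- Given any array of points (x_i^h)_{i,h≥1} in T_n^d, for every p ∈ ℕ one has B^p(k) ⊆ B^{p+1}(k) ⊆ B^*(k) for all k ∈ ℕ; in particular, H_i^{p+1} ≤ H_i^{p+2} ≤ H_i^* for all i ≥ 1. -/
open MeasureTheory ProbabilityTheory Filter

open Classical in
/-- The intermediate burning processes `B^p(·)` constructed from the array `xs`
(`xs i h` stands for `x_{i+1}^{h+1}`): `B^0(k) = ∅` and `B^{p+1}(k) = ⋃_{i=1}^k
B̄(y_i^{p+1}, k−i)`, where `y_i^{p+1}` is the first point of `(x_i^h)_h` lying outside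
`B^p(i−1)` (and `x_i^1` if there is none). -/
noncomputable def interB (d n : ℕ) (xs : ℕ → ℕ → (Fin d → ZMod n)) :
    ℕ → ℕ → Set (Fin d → ZMod n)
  | 0, _ => ∅
  | (p + 1), k =>
      ⋃ i ∈ Finset.range k,
        torusBall d n
          (if h : ∃ m : ℕ, xs i m ∉ interB d n xs p i then xs i (Nat.find h) else xs i 0)
          (k - 1 - i)

open Classical in
/-- `interH d n xs p i` is `H_{i+1}^{p+1} = inf{h ≥ 1 : x_{i+1}^h ∉ B^p(i)} ∈ ℕ∞`,
recorded `0`-indexed (so `interH d n xs p i = h₀` corresponds to `H_{i+1}^{p+1} = h₀+1`). -/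
noncomputable def interH (d n : ℕ) (xs : ℕ → ℕ → (Fin d → ZMod n)) (p i : ℕ) : ℕ∞ :=
  if h : ∃ m : ℕ, xs i m ∉ interB d n xs p i then (Nat.find h : ℕ∞) else ⊤

open Classical in
/-- Auxiliary construction for the rejection-sampling process: `starYaux d n xs (k+1)`
agrees with `starYaux d n xs k` below index `k` and chooses `y_{k+1}^*` at index `k`. -/
noncomputable def starYaux (d n : ℕ) (xs : ℕ → ℕ → (Fin d → ZMod n)) :
    ℕ → ℕ → (Fin d → ZMod n)
  | 0, i => xs i 0
  | (k + 1), i =>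
      if i = k then
        (if h : ∃ m : ℕ,
            xs k m ∉ ⋃ j ∈ Finset.range k, torusBall d n (starYaux d n xs k j) (k - 1 - j)
          then xs k (Nat.find h) else xs k 0)
      else starYaux d n xs k i

/-- `starY d n xs i` is the point `y_{i+1}^*` of the rejection-sampling process. -/
noncomputable def starY (d n : ℕ) (xs : ℕ → ℕ → (Fin d → ZMod n)) (i : ℕ) :
    Fin d → ZMod n :=
  starYaux d n xs (i + 1) i

/-- The rejection-sampling burning process `B^*(k) = ⋃_{i=1}^k B̄(y_i^*, k−i)`. -/
noncomputable def starB (d n : ℕ) (xs : ℕ → ℕ → (Fin d → ZMod n)) (k : ℕ) :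
    Set (Fin d → ZMod n) :=
  ⋃ i ∈ Finset.range k, torusBall d n (starY d n xs i) (k - 1 - i)

open Classical in
/-- `starH d n xs i` is `H_{i+1}^* = inf{h ≥ 1 : x_{i+1}^h ∉ B^*(i)} ∈ ℕ∞`, recorded
`0`-indexed. -/
noncomputable def starH (d n : ℕ) (xs : ℕ → ℕ → (Fin d → ZMod n)) (i : ℕ) : ℕ∞ :=
  if h : ∃ m : ℕ, xs i m ∉ starB d n xs i then (Nat.find h : ℕ∞) else ⊤

/-!
All the processes are driven by one step: the `i`-th centre is the first proposal outside the
set burnt at time `i - 1`, so `B^{p+1}` is the step applied to `B^p` and `B^*` is a fixed point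
of it. If `A ⊆ B`, the first proposal outside `A` either is the first one outside `B` or lies in
`B`; in the latter case, as long as `B` is contained in the step applied to it, the triangle
inequality puts its ball inside a ball that is already burning. So the step is monotone along
the sequence `B^p` and below `B^*`, and induction on `p` gives both inclusions, hence the
inequalities between the hitting indices.
-/

section TorusGraph

variable {d n : ℕ}

lemma torusGraph_reachable_update_add_one (x : Fin d → ZMod n) (i : Fin d) :
    (torusGraph d n).Reachable x (Function.update x i (x i + 1)) := by
  by_cases h : x i + 1 = x i
  · rw [h, Function.update_eq_self]
  · refine SimpleGraph.Adj.reachable ⟨fun he => h ?_, i, Or.inr (by simp), fun j hj => ?_⟩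
    · simpa using (congrFun he i).symm
    · simp [Function.update_of_ne hj]

lemma torusGraph_reachable_update_add_intCast (x : Fin d → ZMod n) (i : Fin d) (k : ℤ) :
    (torusGraph d n).Reachable x (Function.update x i (x i + k)) := by
  induction k using Int.induction_on with
  | zero => simp
  | succ k ih =>
    have hstep := torusGraph_reachable_update_add_one (Function.update x i (x i + k)) i
    simp only [Function.update_self, Function.update_idem] at hstep
    exact ih.trans (by push_cast; rwa [← add_assoc])
  | pred k ih =>
    have hstep := torusGraph_reachable_update_add_one (Function.update x i (x i + (-k - 1 : ℤ))) i
    simp only [Function.update_self, Function.update_idem] at hstep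
    rw [show x i + ((-k - 1 : ℤ) : ZMod n) + 1 = x i + ((-k : ℤ) : ZMod n) by push_cast; ring]
      at hstep
    exact ih.trans hstep.symm

lemma torusGraph_reachable_update (x : Fin d → ZMod n) (i : Fin d) (c : ZMod n) :
    (torusGraph d n).Reachable x (Function.update x i c) := by
  simpa using torusGraph_reachable_update_add_intCast x i (ZMod.cast (c - x i))

lemma torusGraph_connected : (torusGraph d n).Connected := by
  classical
  refine ⟨fun x y => ?_⟩
  suffices h : ∀ s : Finset (Fin d), (torusGraph d n).Reachable x (s.piecewise y x) by
    simpa using h Finset.univ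
  intro s
  induction s using Finset.induction_on with
  | empty => simp
  | insert a s _ ih =>
    rw [Finset.piecewise_insert]
    exact ih.trans (torusGraph_reachable_update _ a _)

lemma mem_torusBall_of_mem_of_mem {x y w : Fin d → ZMod n} {r s t : ℕ}
    (hy : y ∈ torusBall d n x r) (hw : w ∈ torusBall d n y s) (hrst : r + s ≤ t) :
    w ∈ torusBall d n x t := by
  have hxy : (torusGraph d n).dist x y ≤ r := hy
  have hyw : (torusGraph d n).dist y w ≤ s := hw
  exact (torusGraph_connected.dist_triangle (v := y)).trans (by omega)

lemma burnedSet_congr {x x' : ℕ → Fin d → ZMod n} {k : ℕ} (h : ∀ i < k, x i = x' i) :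
    burnedSet d n x k = burnedSet d n x' k :=
  Set.iUnion₂_congr fun i hi => by rw [h i (Finset.mem_range.1 hi)]

lemma burnedSet_subset_burnedSet {y z : ℕ → Fin d → ZMod n} {k : ℕ}
    (h : ∀ i < k, y i ∈ burnedSet d n z i ∨ y i = z i) :
    burnedSet d n y k ⊆ burnedSet d n z k := by
  intro w hw
  simp only [burnedSet, Set.mem_iUnion, Finset.mem_range, exists_prop] at hw ⊢
  obtain ⟨i, hik, hwi⟩ := hw
  rcases h i hik with hyi | hyi
  · simp only [burnedSet, Set.mem_iUnion, Finset.mem_range, exists_prop] at hyi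
    obtain ⟨j, hji, hyj⟩ := hyi
    exact ⟨j, hji.trans hik, mem_torusBall_of_mem_of_mem hyj hwi (by omega)⟩
  · exact ⟨i, hik, hyi ▸ hwi⟩

end TorusGraph

section FirstOutside

variable {α : Type*}

open Classical in
noncomputable def firstOutside (f : ℕ → α) (A : Set α) : α :=
  if h : ∃ m, f m ∉ A then f (Nat.find h) else f 0

open Classical in
noncomputable def firstOutsideIndex (f : ℕ → α) (A : Set α) : ℕ∞ :=
  if h : ∃ m, f m ∉ A then (Nat.find h : ℕ∞) else ⊤

lemma firstOutsideIndex_mono (f : ℕ → α) : Monotone (firstOutsideIndex f) := by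
  classical
  intro A B hAB
  unfold firstOutsideIndex
  by_cases hB : ∃ m, f m ∉ B
  · have hA : ∃ m, f m ∉ A := hB.imp fun _ => mt (@hAB _)
    rw [dif_pos hA, dif_pos hB]
    exact ENat.natCast_le_natCast.2 (Nat.find_mono fun _ => mt (@hAB _))
  · rw [dif_neg hB]
    exact le_top

lemma firstOutside_mem_or_eq (f : ℕ → α) {A B : Set α} (hAB : A ⊆ B) :
    firstOutside f A ∈ B ∨ firstOutside f A = firstOutside f B := by
  classical
  unfold firstOutside
  by_cases hB : ∃ m, f m ∉ B
  · have hA : ∃ m, f m ∉ A := hB.imp fun _ => mt (@hAB _)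
    rw [dif_pos hA, dif_pos hB]
    refine or_iff_not_imp_left.2 fun hAout => congrArg f (le_antisymm ?_ (Nat.find_min' hB hAout))
    exact Nat.find_mono fun _ => mt (@hAB _)
  · simp only [not_exists, not_not] at hB
    left
    split_ifs <;> exact hB _

end FirstOutside

section BurnStep

variable {d n : ℕ}

/-- The step `B^p ↦ B^{p+1}`; `B^*` is a fixed point of it (`burnStep_starB`). -/
noncomputable def burnStep (d n : ℕ) (xs : ℕ → ℕ → Fin d → ZMod n)
    (A : ℕ → Set (Fin d → ZMod n)) (k : ℕ) : Set (Fin d → ZMod n) :=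
  burnedSet d n (fun i => firstOutside (xs i) (A i)) k

lemma burnStep_subset_burnStep (xs : ℕ → ℕ → Fin d → ZMod n) {A B : ℕ → Set (Fin d → ZMod n)}
    {k : ℕ} (hAB : ∀ i < k, A i ⊆ B i) (hB : ∀ i < k, B i ⊆ burnStep d n xs B i) :
    burnStep d n xs A k ⊆ burnStep d n xs B k :=
  burnedSet_subset_burnedSet fun i hi =>
    (firstOutside_mem_or_eq (xs i) (hAB i hi)).imp_left fun h => hB i hi h

lemma burnStep_le_burnStep_burnStep (xs : ℕ → ℕ → Fin d → ZMod n)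
    {A : ℕ → Set (Fin d → ZMod n)} (hA : A ≤ burnStep d n xs A) :
    burnStep d n xs A ≤ burnStep d n xs (burnStep d n xs A) := by
  intro k
  induction k using Nat.strong_induction_on with
  | _ k ih => exact burnStep_subset_burnStep xs (fun i _ => hA i) ih

lemma interH_eq (xs : ℕ → ℕ → Fin d → ZMod n) (p i : ℕ) :
    interH d n xs p i = firstOutsideIndex (xs i) (interB d n xs p i) :=
  rfl

lemma starH_eq (xs : ℕ → ℕ → Fin d → ZMod n) (i : ℕ) :
    starH d n xs i = firstOutsideIndex (xs i) (starB d n xs i) :=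
  rfl

lemma starYaux_of_lt (xs : ℕ → ℕ → Fin d → ZMod n) {k i : ℕ} (hik : i < k) :
    starYaux d n xs k i = starY d n xs i := by
  induction k with
  | zero => omega
  | succ k ih =>
    rcases (Nat.lt_succ_iff.1 hik).lt_or_eq with hik | rfl
    · rw [starYaux, if_neg hik.ne, ih hik]
    · rfl

lemma starY_eq_firstOutside (xs : ℕ → ℕ → Fin d → ZMod n) (i : ℕ) :
    starY d n xs i = firstOutside (xs i) (starB d n xs i) := by
  have hB : starB d n xs i = burnedSet d n (starYaux d n xs i) i :=
    burnedSet_congr fun j hj => (starYaux_of_lt xs hj).symm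
  rw [hB]
  exact if_pos rfl

lemma burnStep_starB (xs : ℕ → ℕ → Fin d → ZMod n) :
    burnStep d n xs (starB d n xs) = starB d n xs := by
  funext k
  exact congrArg (burnedSet d n · k) (funext fun i => (starY_eq_firstOutside xs i).symm)

end BurnStep

theorem interB_subset_starB_general (d n : ℕ)
    (xs : ℕ → ℕ → (Fin d → ZMod n)) :
    ∀ p : ℕ,
      (∀ k : ℕ, interB d n xs p k ⊆ interB d n xs (p + 1) k ∧
        interB d n xs (p + 1) k ⊆ starB d n xs k) ∧
      (∀ i : ℕ, interH d n xs p i ≤ interH d n xs (p + 1) i ∧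
        interH d n xs (p + 1) i ≤ starH d n xs i) := by
  have hstar := burnStep_starB xs
  have hsets : ∀ p, interB d n xs p ≤ interB d n xs (p + 1) ∧
      interB d n xs (p + 1) ≤ starB d n xs := by
    have hle_star : ∀ p, interB d n xs p ≤ starB d n xs → interB d n xs (p + 1) ≤ starB d n xs :=
      fun p hp k => hstar ▸ burnStep_subset_burnStep xs (fun i _ => hp i) (fun i _ => hstar.ge i)
    intro p
    induction p with
    | zero => exact ⟨fun _ => Set.empty_subset _, hle_star 0 fun _ => Set.empty_subset _⟩
    | succ p ih => exact ⟨burnStep_le_burnStep_burnStep xs ih.1, hle_star (p + 1) ih.2⟩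
  intro p
  refine ⟨fun k => ⟨(hsets p).1 k, (hsets p).2 k⟩, fun i => ⟨?_, ?_⟩⟩
  · rw [interH_eq, interH_eq]
    exact firstOutsideIndex_mono _ ((hsets p).1 i)
  · rw [interH_eq, starH_eq]
    exact firstOutsideIndex_mono _ ((hsets p).2 i)

/-- For any array of points `(x_i^h)` of the torus and every `p`,
`B^p(k) ⊆ B^{p+1}(k) ⊆ B^*(k)` for all `k`; in particular
`H_i^{p+1} ≤ H_i^{p+2} ≤ H_i^*` for all `i`. -/
theorem interB_subset_starB (d n : ℕ) (hd : 1 ≤ d) (hn : 1 ≤ n)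
    (xs : ℕ → ℕ → (Fin d → ZMod n)) :
    ∀ p : ℕ,
      (∀ k : ℕ, interB d n xs p k ⊆ interB d n xs (p + 1) k ∧
        interB d n xs (p + 1) k ⊆ starB d n xs k) ∧
      (∀ i : ℕ, interH d n xs p i ≤ interH d n xs (p + 1) i ∧
        interH d n xs (p + 1) i ≤ starH d n xs i) :=
  interB_subset_starB_general d n xs
end
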